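/- arXiv:math/0609578 — 2 statements merged into one kernel-verified Lean document; each statement's English description precedes it below -/
import Mathlib

section
/- Let x be a nonzero real number, and let (r₁, r₂, r₃, r₄) be a planar non-collinear central configuration with multiplier ξ ≠ 0 for the masses (x, −x, x, −x). Then the configuration is a diamond (rhombus): r₂ − r₁ = r₃ − r₄ and ‖r₂ − r₁‖ = ‖r₃ − r₂‖ = ‖r₄ − r₃‖ = ‖r₁ − r₄‖. -/
/-- The gravitational acceleration of body `i` in a planar `N`-body configuration
with masses `m` and positions `r`. -/
noncomputable def accel {N : ℕ} (m : Fin N → ℝ) (r : Fin N → EuclideanSpace ℝ (Fin 2))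
    (i : Fin N) : EuclideanSpace ℝ (Fin 2) :=
  ∑ j ∈ Finset.univ.erase i, (m j / ‖r j - r i‖ ^ 3) • (r j - r i)

/-- The configuration is central with multiplier `ξ`:
`γ_j - γ_i = ξ • (r_j - r_i)` for all `i`, `j`. -/
def IsCentral {N : ℕ} (m : Fin N → ℝ) (r : Fin N → EuclideanSpace ℝ (Fin 2)) (ξ : ℝ) : Prop :=
  ∀ i j, accel m r j - accel m r i = ξ • (r j - r i)

/-- `accel` written as a sum over all indices (the `j = i` term vanishes). -/
lemma accel_univ {N : ℕ} (m : Fin N → ℝ) (r : Fin N → EuclideanSpace ℝ (Fin 2)) (i : Fin N) :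
    accel m r i = ∑ j, (m j / ‖r j - r i‖ ^ 3) • (r j - r i) := by
  rw [accel, Finset.sum_erase]
  simp

/-- A planar non-collinear central configuration with nonzero multiplier for the
masses x, -x, x, -x is a diamond (rhombus): r₂ - r₁ = r₃ - r₄ and the four sides have
equal lengths. -/
theorem central_config_equal_masses_is_diamond
    (x : ℝ) (hx : x ≠ 0)
    (r : Fin 4 → EuclideanSpace ℝ (Fin 2))
    (hinj : Function.Injective r)
    (hnc : ¬ Collinear ℝ (Set.range r))
    (ξ : ℝ) (hξ : ξ ≠ 0)
    (hc : IsCentral ![x, -x, x, -x] r ξ) :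
    r 1 - r 0 = r 2 - r 3 ∧
    ‖r 1 - r 0‖ = ‖r 2 - r 1‖ ∧ ‖r 2 - r 1‖ = ‖r 3 - r 2‖ ∧ ‖r 3 - r 2‖ = ‖r 0 - r 3‖ := by
  have hM0 : (![x,-x,x,-x] : Fin 4 → ℝ) 0 = x := rfl
  have hM1 : (![x,-x,x,-x] : Fin 4 → ℝ) 1 = -x := rfl
  have hM2 : (![x,-x,x,-x] : Fin 4 → ℝ) 2 = x := rfl
  have hM3 : (![x,-x,x,-x] : Fin 4 → ℝ) 3 = -x := rfl
  have hne : ∀ i j : Fin 4, i ≠ j → r i - r j ≠ 0 :=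
    fun i j hij => sub_ne_zero_of_ne (fun h => hij (hinj h))
  -- Step 1 : the weighted sum of accelerations vanishes
  have hacc : accel ![x,-x,x,-x] r 0 - accel ![x,-x,x,-x] r 1 + accel ![x,-x,x,-x] r 2
      - accel ![x,-x,x,-x] r 3 = 0 := by
    simp only [accel_univ, Fin.sum_univ_four, hM0, hM1, hM2, hM3]
    rw [show ‖r 0 - r 1‖ = ‖r 1 - r 0‖ from norm_sub_rev _ _,
        show ‖r 0 - r 2‖ = ‖r 2 - r 0‖ from norm_sub_rev _ _,
        show ‖r 0 - r 3‖ = ‖r 3 - r 0‖ from norm_sub_rev _ _,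
        show ‖r 1 - r 2‖ = ‖r 2 - r 1‖ from norm_sub_rev _ _,
        show ‖r 1 - r 3‖ = ‖r 3 - r 1‖ from norm_sub_rev _ _,
        show ‖r 2 - r 3‖ = ‖r 3 - r 2‖ from norm_sub_rev _ _]
    module
  -- Step 2 : parallelogram
  have hpar : r 1 - r 0 = r 2 - r 3 := by
    have h1 := hc 1 0
    have h2 := hc 3 2
    have hv : ξ • (r 0 - r 1) + ξ • (r 2 - r 3) = 0 := by
      rw [← h1, ← h2]
      linear_combination (norm := module) hacc
    have hv2 : r 0 - r 1 + (r 2 - r 3) = 0 := by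
      have : ξ • (r 0 - r 1 + (r 2 - r 3)) = 0 := by
        rw [smul_add]; exact hv
      exact (smul_eq_zero.mp this).resolve_left hξ
    linear_combination (norm := module) -hv2
  have h2eq : r 2 = r 1 + r 3 - r 0 := by
    linear_combination (norm := module) -hpar
  have e12 : r 2 - r 1 = r 3 - r 0 := by linear_combination (norm := module) -hpar
  have e23 : r 3 - r 2 = r 0 - r 1 := by linear_combination (norm := module) hpar
  -- Step 3 : linear independence of the two sides
  have hw0 : r 3 - r 0 ≠ 0 := hne 3 0 (by decide)
  have hindep : ∀ a b : ℝ, a • (r 1 - r 0) + b • (r 3 - r 0) = 0 → a = 0 ∧ b = 0 := by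
    intro a b hab
    by_contra hcon
    apply hnc
    rw [not_and_or] at hcon
    have ha : a ≠ 0 := by
      rcases hcon with h | h
      · exact h
      · intro ha0
        apply h
        rw [ha0, zero_smul, zero_add] at hab
        exact (smul_eq_zero.mp hab).resolve_right hw0
    have hu : r 1 - r 0 = (-(b/a)) • (r 3 - r 0) := by
      apply smul_right_injective _ ha
      show a • (r 1 - r 0) = a • (-(b / a) • (r 3 - r 0))
      rw [smul_smul, show a * (-(b/a)) = -b from by field_simp]
      linear_combination (norm := module) hab
    rw [collinear_iff_of_mem (Set.mem_range_self 0)]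
    refine ⟨r 3 - r 0, ?_⟩
    rintro p ⟨i, rfl⟩
    fin_cases i
    · exact ⟨0, by simp⟩
    · exact ⟨-(b/a), by rw [vadd_eq_add, ← hu]; abel⟩
    · refine ⟨1 + -(b/a), ?_⟩
      show r 2 = (1 + -(b/a)) • (r 3 - r 0) +ᵥ r 0
      rw [vadd_eq_add, h2eq]
      linear_combination (norm := module) hu
    · exact ⟨1, by rw [vadd_eq_add, one_smul]; abel⟩
  -- Step 4 : the two central equations in the basis (u, w)
  have hc01 := hc 0 1
  have hc03 := hc 0 3
  simp only [accel_univ, Fin.sum_univ_four, hM0, hM1, hM2, hM3] at hc01 hc03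
  rw [show ‖r 0 - r 1‖ = ‖r 1 - r 0‖ from norm_sub_rev _ _,
      show ‖r 2 - r 1‖ = ‖r 3 - r 0‖ from by rw [e12]] at hc01
  rw [show ‖r 0 - r 3‖ = ‖r 3 - r 0‖ from norm_sub_rev _ _,
      show ‖r 1 - r 3‖ = ‖r 3 - r 1‖ from norm_sub_rev _ _,
      show ‖r 2 - r 3‖ = ‖r 1 - r 0‖ from by rw [← hpar]] at hc03
  set dA := ‖r 1 - r 0‖ with hdA
  set dB := ‖r 3 - r 0‖ with hdB
  set dP := ‖r 2 - r 0‖ with hdP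
  set dQ := ‖r 3 - r 1‖ with hdQ
  rw [h2eq] at hc01 hc03
  have key1 : (x/dQ^3 - x/dP^3 - ξ) • (r 1 - r 0)
      + (2*x/dB^3 - x/dP^3 - x/dQ^3) • (r 3 - r 0) = 0 := by
    linear_combination (norm := module) hc01
  have key2 : (2*x/dA^3 - x/dP^3 - x/dQ^3) • (r 1 - r 0)
      + (x/dQ^3 - x/dP^3 - ξ) • (r 3 - r 0) = 0 := by
    linear_combination (norm := module) hc03
  obtain ⟨-, hB⟩ := hindep _ _ key1
  obtain ⟨hA, -⟩ := hindep _ _ key2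
  -- Step 5 : deduce dA = dB
  have hApos : 0 < dA := by rw [hdA]; exact norm_pos_iff.mpr (hne 1 0 (by decide))
  have hBpos : 0 < dB := by rw [hdB]; exact norm_pos_iff.mpr (hne 3 0 (by decide))
  have hcube : dA ^ 3 = dB ^ 3 := by
    have h : 2*x/dA^3 = 2*x/dB^3 := by linarith
    rw [div_eq_mul_inv, div_eq_mul_inv] at h
    exact inv_injective (mul_left_cancel₀ (mul_ne_zero two_ne_zero hx) h)
  have hAB : dA = dB :=
    (pow_left_inj₀ hApos.le hBpos.le (by norm_num)).mp hcube
  refine ⟨hpar, ?_, ?_, ?_⟩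
  · rw [show ‖r 2 - r 1‖ = dB from by rw [e12]]; exact hAB
  · rw [show ‖r 2 - r 1‖ = dB from by rw [e12],
        show ‖r 3 - r 2‖ = dA from by rw [e23, hdA, norm_sub_rev]]
    exact hAB.symm
  · rw [show ‖r 3 - r 2‖ = dA from by rw [e23, hdA, norm_sub_rev],
        show ‖r 0 - r 3‖ = dB from by rw [hdB, norm_sub_rev]]
    exact hAB
end

section
/- There is no planar non-collinear four-body central configuration with vanishing total mass, vanishing vector of inertia, and vanishing moment of inertia: there exist no pairwise distinct points r₁, r₂, r₃, r₄ in ℝ², not all on one line, and nonzero real masses m₁, m₂, m₃, m₄ with m₁ + m₂ + m₃ + m₄ = 0, m₁r₁ + m₂r₂ + m₃r₃ + m₄r₄ = 0, and m₁‖r₁‖² + m₂‖r₂‖² + m₃‖r₃‖² + m₄‖r₄‖² = 0, such that the configuration is central with some multiplier ξ. -/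
/-!
The three mass conditions say `∑ i, m i • (1, r i, ‖r i‖ ^ 2) = 0`, so these four vectors of the
four-dimensional space `ℝ × ℝ² × ℝ` are linearly dependent: the points satisfy a nontrivial
equation `a + ⟪b, x⟫ + c * ‖x‖ ^ 2 = 0`, and as they are not collinear they lie on a circle.

Pairing the central configuration equation for the bodies `i`, `j` with `r j - r i` through the
area form removes the multiplier and the mutual attraction of `i` and `j`; the vanishing total mass
and inertia vector then eliminate the masses (no three points of a circle are collinear), leaving
`d_ik⁻³ + d_jl⁻³ = d_il⁻³ + d_jk⁻³` for every labelling: the three ways of splitting the four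
points into two pairs have the same sum of inverse cubed distances. This is impossible on a
circle: writing chords as `2 R sin` of inscribed angles, one pair of opposite sides of the cyclic
quadrilateral consists of chords strictly shorter than the two diagonals.
-/

open Module EuclideanGeometry RealInnerProductSpace Real

section SphereEquation

variable {ι E : Type*} [NormedAddCommGroup E] [InnerProductSpace ℝ E]

def sphereEquationEval (r : ι → E) : ℝ × E × ℝ →ₗ[ℝ] ι → ℝ where
  toFun x i := x.1 + ⟪x.2.1, r i⟫ + x.2.2 * ‖r i‖ ^ 2
  map_add' x y := by
    ext i; simp only [Prod.fst_add, Prod.snd_add, inner_add_left, Pi.add_apply]; ring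
  map_smul' c x := by
    ext i; simp only [Prod.smul_fst, Prod.smul_snd, real_inner_smul_left, smul_eq_mul,
      RingHom.id_apply, Pi.smul_apply]; ring

lemma dotProduct_sphereEquationEval [Fintype ι] (r : ι → E) (m : ι → ℝ) (x : ℝ × E × ℝ) :
    m ⬝ᵥ sphereEquationEval r x
      = x.1 * ∑ i, m i + ⟪x.2.1, ∑ i, m i • r i⟫ + x.2.2 * ∑ i, m i * ‖r i‖ ^ 2 := by
  simp only [dotProduct, sphereEquationEval, LinearMap.coe_mk, AddHom.coe_mk, inner_sum,
    real_inner_smul_right, Finset.mul_sum, ← Finset.sum_add_distrib]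
  exact Finset.sum_congr rfl fun i _ => by ring

lemma exists_sphereEquation_of_sum_eq_zero [Fintype ι] [FiniteDimensional ℝ E]
    (hcard : Fintype.card ι = finrank ℝ E + 2) {r : ι → E} {m : ι → ℝ} (hm : m ≠ 0)
    (hM : ∑ i, m i = 0) (hL : ∑ i, m i • r i = 0) (hI : ∑ i, m i * ‖r i‖ ^ 2 = 0) :
    ∃ x ≠ 0, sphereEquationEval r x = 0 := by
  have hrank : finrank ℝ (ℝ × E × ℝ) = finrank ℝ (ι → ℝ) := by
    simp only [finrank_prod, finrank_self, finrank_fintype_fun_eq_card, hcard]; ring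
  have hninj : ¬ Function.Injective (sphereEquationEval r) := by
    rw [LinearMap.injective_iff_surjective_of_finrank_eq_finrank hrank]
    intro hsurj
    obtain ⟨x, hx⟩ := hsurj m
    have := dotProduct_sphereEquationEval r m x
    rw [hx, hM, hL, hI, inner_zero_right] at this
    exact hm (dotProduct_self_eq_zero.mp (by simpa using this))
  rw [injective_iff_map_eq_zero] at hninj
  push Not at hninj
  obtain ⟨x, hx, hx0⟩ := hninj
  exact ⟨x, hx0, hx⟩

lemma cospherical_or_exists_inner_eq_of_sphereEquation [Nonempty ι] {r : ι → E}
    {x : ℝ × E × ℝ} (hx : x ≠ 0) (h : sphereEquationEval r x = 0) :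
    Cospherical (Set.range r) ∨ ∃ b ≠ 0, ∃ a : ℝ, ∀ i, ⟪b, r i⟫ = a := by
  obtain ⟨a, b, c⟩ := x
  have hr (i : ι) : a + ⟪b, r i⟫ + c * ‖r i‖ ^ 2 = 0 := congrFun h i
  by_cases hc : c = 0
  · refine .inr ⟨b, fun hb => hx ?_, -a, fun i => by linarith [hc ▸ hr i]⟩
    obtain ⟨i⟩ := ‹Nonempty ι›
    have := hr i
    simp only [hb, hc, inner_zero_left, zero_mul, add_zero] at this
    simp [this, hb, hc]
  · left
    -- complete the square
    refine ⟨-(2 * c)⁻¹ • b, √(‖b‖ ^ 2 / (4 * c ^ 2) - a / c), ?_⟩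
    rintro _ ⟨i, rfl⟩
    rw [dist_eq_norm, ← Real.sqrt_sq (norm_nonneg _)]
    congr 1
    rw [neg_smul, sub_neg_eq_add, norm_add_sq_real, norm_smul, real_inner_smul_right, mul_pow,
      Real.norm_eq_abs, sq_abs, real_inner_comm]
    field_simp
    linear_combination (16 * c) * hr i

lemma collinear_of_forall_inner_eq [Fact (finrank ℝ E = 2)] {s : Set E} {b : E} (hb : b ≠ 0)
    {a : ℝ} (h : ∀ p ∈ s, ⟪b, p⟫ = a) : Collinear ℝ s := by
  have : FiniteDimensional ℝ E := .of_fact_finrank_eq_two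
  have hspan : vectorSpan ℝ s ≤ (ℝ ∙ b)ᗮ := by
    refine Submodule.span_le.mpr ?_
    rintro _ ⟨p, hp, q, hq, rfl⟩
    rw [SetLike.mem_coe, Submodule.mem_orthogonal_singleton_iff_inner_right]
    change ⟪b, p - q⟫ = 0
    rw [inner_sub_right, h p hp, h q hq, sub_self]
  rw [collinear_iff_finrank_le_one]
  exact (Submodule.finrank_mono hspan).trans
    (Submodule.finrank_orthogonal_span_singleton (n := 1) hb).le

theorem cospherical_range_of_sum_eq_zero [Fintype ι] [Fact (finrank ℝ E = 2)]
    (hcard : Fintype.card ι = 4) {r : ι → E} (hr : ¬ Collinear ℝ (Set.range r)) {m : ι → ℝ}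
    (hm : m ≠ 0) (hM : ∑ i, m i = 0) (hL : ∑ i, m i • r i = 0)
    (hI : ∑ i, m i * ‖r i‖ ^ 2 = 0) : Cospherical (Set.range r) := by
  have : FiniteDimensional ℝ E := .of_fact_finrank_eq_two
  have : Nonempty ι := Fintype.card_pos_iff.mp (by omega)
  obtain ⟨x, hx, hrx⟩ := exists_sphereEquation_of_sum_eq_zero
    (by rw [hcard, Fact.out (p := finrank ℝ E = 2)]) hm hM hL hI
  refine (cospherical_or_exists_inner_eq_of_sphereEquation hx hrx).resolve_right ?_
  rintro ⟨b, hb, a, hba⟩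
  exact hr (collinear_of_forall_inner_eq hb (by rintro _ ⟨i, rfl⟩; exact hba i))

end SphereEquation

namespace Orientation

variable {E : Type*} [NormedAddCommGroup E] [InnerProductSpace ℝ E] [Fact (finrank ℝ E = 2)]
  (o : Orientation ℝ E (Fin 2))

lemma norm_sq_smul_eq_inner_smul_of_areaForm_eq_zero {x y : E} (h : o.areaForm x y = 0) :
    ‖x‖ ^ 2 • y = ⟪x, y⟫ • x := by
  refine ext_inner_left ℝ fun z => ?_
  have := o.inner_mul_inner_add_areaForm_mul_areaForm x y z
  rw [h, zero_mul, add_zero] at this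
  rw [real_inner_smul_right, real_inner_smul_right, real_inner_comm x z, real_inner_comm y z]
  linarith

lemma areaForm_sub_ne_zero_of_not_collinear {p q s : E} (h : ¬ Collinear ℝ {p, q, s}) :
    o.areaForm (q - p) (s - p) ≠ 0 := by
  intro h0
  have hqp : q - p ≠ 0 := fun hqp => h (by simp [sub_eq_zero.mp hqp, collinear_pair])
  have hnorm : ‖q - p‖ ^ 2 ≠ 0 := by positivity
  apply h
  rw [collinear_iff_of_mem (Set.mem_insert p _)]
  refine ⟨q - p, ?_⟩
  simp only [Set.mem_insert_iff, Set.mem_singleton_iff, forall_eq_or_imp, forall_eq, vadd_eq_add]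
  refine ⟨⟨0, by simp⟩, ⟨1, by simp⟩, ⟨⟪q - p, s - p⟫ / ‖q - p‖ ^ 2, ?_⟩⟩
  rw [div_eq_inv_mul, mul_smul, ← o.norm_sq_smul_eq_inner_smul_of_areaForm_eq_zero h0,
    inv_smul_smul₀ hnorm, sub_add_cancel]

end Orientation

instance : Fact (finrank ℝ (EuclideanSpace ℝ (Fin 2)) = 2) := ⟨finrank_euclideanSpace_fin⟩

section CentralConfiguration

variable {N : ℕ} {m : Fin N → ℝ} {r : Fin N → EuclideanSpace ℝ (Fin 2)}
  (o : Orientation ℝ (EuclideanSpace ℝ (Fin 2)) (Fin 2))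

lemma accel_eq_sum (i : Fin N) :
    accel m r i = ∑ j, (m j / ‖r j - r i‖ ^ 3) • (r j - r i) :=
  Finset.sum_erase _ (by simp)

lemma areaForm_accel_sub_accel (i j : Fin N) :
    o.areaForm (r j - r i) (accel m r j - accel m r i) = ∑ k,
      m k * ((‖r k - r j‖ ^ 3)⁻¹ - (‖r k - r i‖ ^ 3)⁻¹) * o.areaForm (r j - r i) (r k - r i) := by
  rw [accel_eq_sum, accel_eq_sum, ← Finset.sum_sub_distrib, map_sum]
  refine Finset.sum_congr rfl fun k _ => ?_
  have hk : o.areaForm (r j - r i) (r k - r j) = o.areaForm (r j - r i) (r k - r i) := by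
    rw [← sub_sub_sub_cancel_right (r k) (r j) (r i), map_sub, o.areaForm_apply_self, sub_zero]
  rw [map_sub, map_smul, map_smul, smul_eq_mul, smul_eq_mul, hk]
  ring

lemma IsCentral.sum_mul_areaForm_eq_zero {ξ : ℝ} (hC : IsCentral m r ξ) (i j : Fin N) :
    ∑ k, m k * ((‖r k - r j‖ ^ 3)⁻¹ - (‖r k - r i‖ ^ 3)⁻¹) * o.areaForm (r j - r i) (r k - r i)
      = 0 := by
  rw [← areaForm_accel_sub_accel, hC i j, map_smul, o.areaForm_apply_self, smul_zero]

lemma sum_mul_areaForm_sub_eq_zero (hM : ∑ i, m i = 0) (hL : ∑ i, m i • r i = 0)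
    (u : EuclideanSpace ℝ (Fin 2)) (i : Fin N) : ∑ k, m k * o.areaForm u (r k - r i) = 0 := by
  have hmoment : ∑ k, m k • (r k - r i) = 0 := by
    simp only [smul_sub, Finset.sum_sub_distrib, ← Finset.sum_smul, hM, hL, zero_smul, sub_zero]
  calc ∑ k, m k * o.areaForm u (r k - r i) = o.areaForm u (∑ k, m k • (r k - r i)) := by
        simp only [map_sum, map_smul, smul_eq_mul]
    _ = 0 := by rw [hmoment, map_zero]

theorem IsCentral.inv_dist_cube_add_eq {m : Fin 4 → ℝ} {r : Fin 4 → EuclideanSpace ℝ (Fin 2)}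
    {ξ : ℝ} (hC : IsCentral m r ξ) (hm : ∀ i, m i ≠ 0) (hM : ∑ i, m i = 0)
    (hL : ∑ i, m i • r i = 0) (hr : Function.Injective r) (hcos : Cospherical (Set.range r))
    (σ : Equiv.Perm (Fin 4)) :
    (dist (r (σ 0)) (r (σ 2)) ^ 3)⁻¹ + (dist (r (σ 1)) (r (σ 3)) ^ 3)⁻¹
      = (dist (r (σ 0)) (r (σ 3)) ^ 3)⁻¹ + (dist (r (σ 1)) (r (σ 2)) ^ 3)⁻¹ := by
  let o : Orientation ℝ (EuclideanSpace ℝ (Fin 2)) (Fin 2) :=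
    (EuclideanSpace.basisFun (Fin 2) ℝ).toBasis.orientation
  have hne (a b : Fin 4) (hab : a ≠ b) : r (σ a) ≠ r (σ b) := hr.ne (σ.injective.ne hab)
  have hA : o.areaForm (r (σ 1) - r (σ 0)) (r (σ 2) - r (σ 0)) ≠ 0 := by
    refine o.areaForm_sub_ne_zero_of_not_collinear (affineIndependent_iff_not_collinear_set.mp ?_)
    refine (hcos.subset ?_).affineIndependent_of_ne (hne 0 1 (by decide)) (hne 0 2 (by decide))
      (hne 1 2 (by decide))
    simp only [Set.insert_subset_iff, Set.mem_range_self, Set.singleton_subset_iff, and_self]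
  have hcentral := hC.sum_mul_areaForm_eq_zero o (σ 0) (σ 1)
  have hmoment := sum_mul_areaForm_sub_eq_zero o hM hL (r (σ 1) - r (σ 0)) (σ 0)
  rw [← Equiv.sum_comp σ, Fin.sum_univ_four] at hcentral hmoment
  simp only [sub_self, map_zero, o.areaForm_apply_self, mul_zero, zero_add] at hcentral hmoment
  set A := o.areaForm (r (σ 1) - r (σ 0)) (r (σ 2) - r (σ 0))
  have hkey : m (σ 2) * A * ((‖r (σ 2) - r (σ 1)‖ ^ 3)⁻¹ - (‖r (σ 2) - r (σ 0)‖ ^ 3)⁻¹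
      - (‖r (σ 3) - r (σ 1)‖ ^ 3)⁻¹ + (‖r (σ 3) - r (σ 0)‖ ^ 3)⁻¹) = 0 := by
    linear_combination
      hcentral - ((‖r (σ 3) - r (σ 1)‖ ^ 3)⁻¹ - (‖r (σ 3) - r (σ 0)‖ ^ 3)⁻¹) * hmoment
  have := (mul_eq_zero.mp hkey).resolve_left (mul_ne_zero (hm (σ 2)) hA)
  simp only [dist_eq_norm, norm_sub_rev (r (σ 0)), norm_sub_rev (r (σ 1))]
  linarith

end CentralConfiguration

lemma StrictAntiOn.not_sin_pairings_eq {f : ℝ → ℝ} (hf : StrictAntiOn f (Set.Ioi 0))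
    {α β γ δ : ℝ} (hα : 0 < α) (hβ : 0 < β) (hγ : 0 < γ) (hδ : 0 < δ)
    (hsum : α + β + γ + δ = π) :
    ¬ (f (sin α) + f (sin γ) = f (sin (α + β)) + f (sin (β + γ)) ∧
      f (sin β) + f (sin δ) = f (sin (α + β)) + f (sin (β + γ))) := by
  rintro ⟨h₁, h₂⟩
  have hlt {x y : ℝ} (hx : 0 < x) (hy : 0 < y) (hxy : x + y ≤ π / 2) :
      f (sin (x + y)) < f (sin x) :=
    hf (sin_pos_of_pos_of_lt_pi hx (by linarith [pi_pos]))
      (sin_pos_of_pos_of_lt_pi (by linarith) (by linarith [pi_pos]))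
      (sin_lt_sin_of_lt_of_le_pi_div_two (by linarith [pi_pos]) hxy (by linarith))
  have hαβ : sin (α + β) = sin (γ + δ) := by rw [← sin_pi_sub]; congr 1; linarith
  have hβγ : sin (β + γ) = sin (α + δ) := by rw [← sin_pi_sub]; congr 1; linarith
  rcases le_or_gt (α + β) (π / 2) with h | h <;> rcases le_or_gt (β + γ) (π / 2) with h' | h'
  · have hA : f (sin (α + β)) < f (sin α) := hlt hα hβ h
    have hC : f (sin (β + γ)) < f (sin γ) := by rw [add_comm]; exact hlt hγ hβ (by linarith)
    linarith
  · have hB : f (sin (α + β)) < f (sin β) := by rw [add_comm]; exact hlt hβ hα (by linarith)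
    have hD : f (sin (β + γ)) < f (sin δ) := by rw [hβγ, add_comm]; exact hlt hδ hα (by linarith)
    linarith
  · have hD : f (sin (α + β)) < f (sin δ) := by rw [hαβ, add_comm]; exact hlt hδ hγ (by linarith)
    have hB : f (sin (β + γ)) < f (sin β) := hlt hβ hγ h'
    linarith
  · have hC : f (sin (α + β)) < f (sin γ) := by rw [hαβ]; exact hlt hγ hδ (by linarith)
    have hA : f (sin (β + γ)) < f (sin α) := by rw [hβγ]; exact hlt hα hδ (by linarith)
    linarith

namespace Complex

lemma dist_mul_exp_mul_I_of_lt {R : ℝ} (hR : 0 ≤ R) {x y : ℝ} (hxy : x < y)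
    (hyx : y < x + 2 * π) :
    dist (R * exp (x * I)) (R * exp (y * I)) = 2 * R * Real.sin ((y - x) / 2) := by
  have hdiff : exp (y * I) - exp (x * I) = exp (x * I) * (exp (I * ↑(y - x)) - 1) := by
    rw [mul_sub, ← exp_add, mul_one]; push_cast; ring_nf
  rw [dist_comm, dist_eq_norm, ← mul_sub, hdiff, norm_mul, norm_mul, norm_exp_ofReal_mul_I,
    norm_exp_I_mul_ofReal_sub_one, norm_real, Real.norm_of_nonneg hR, norm_mul, Real.norm_two,
    Real.norm_of_nonneg (Real.sin_pos_of_pos_of_lt_pi (by linarith) (by linarith)).le]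
  ring

lemma inv_dist_cube_pairings_ne_of_strictMono {R : ℝ} (hR : 0 < R) {θ : Fin 4 → ℝ}
    (hθ : StrictMono θ) (h2π : θ 3 < θ 0 + 2 * π) {z : Fin 4 → ℂ}
    (hz : ∀ i, z i = R * exp (θ i * I)) :
    ¬ ((dist (z 0) (z 1) ^ 3)⁻¹ + (dist (z 2) (z 3) ^ 3)⁻¹
          = (dist (z 0) (z 2) ^ 3)⁻¹ + (dist (z 1) (z 3) ^ 3)⁻¹ ∧
        (dist (z 1) (z 2) ^ 3)⁻¹ + (dist (z 0) (z 3) ^ 3)⁻¹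
          = (dist (z 0) (z 2) ^ 3)⁻¹ + (dist (z 1) (z 3) ^ 3)⁻¹) := by
  have hchord (i j : Fin 4) (hij : i < j) :
      dist (z i) (z j) = 2 * R * Real.sin ((θ j - θ i) / 2) := by
    rw [hz, hz]
    exact dist_mul_exp_mul_I_of_lt hR.le (hθ hij)
      (by linarith [hθ.monotone (Fin.zero_le i), hθ.monotone (show j ≤ 3 from Fin.le_last j)])
  have hf : StrictAntiOn (fun t => ((2 * R * t) ^ 3)⁻¹) (Set.Ioi 0) := fun s hs t _ hst => by
    simp only [Set.mem_Ioi] at hs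
    dsimp only
    gcongr
  have h01 := hθ (show (0 : Fin 4) < 1 by decide)
  have h12 := hθ (show (1 : Fin 4) < 2 by decide)
  have h23 := hθ (show (2 : Fin 4) < 3 by decide)
  rw [hchord 0 1 (by decide), hchord 2 3 (by decide), hchord 0 2 (by decide),
    hchord 1 3 (by decide), hchord 1 2 (by decide), hchord 0 3 (by decide),
    show θ 2 - θ 0 = (θ 1 - θ 0) + (θ 2 - θ 1) by ring,
    show θ 3 - θ 1 = (θ 2 - θ 1) + (θ 3 - θ 2) by ring, add_div, add_div,
    ← Real.sin_pi_sub ((θ 3 - θ 0) / 2)]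
  exact hf.not_sin_pairings_eq (by linarith) (by linarith) (by linarith)
    (by linarith : 0 < π - (θ 3 - θ 0) / 2) (by ring)

theorem not_forall_inv_dist_cube_add_eq {z : Fin 4 → ℂ} (hz : Function.Injective z)
    {R : ℝ} (hR : ∀ i, ‖z i‖ = R) :
    ¬ ∀ σ : Equiv.Perm (Fin 4),
      (dist (z (σ 0)) (z (σ 2)) ^ 3)⁻¹ + (dist (z (σ 1)) (z (σ 3)) ^ 3)⁻¹
        = (dist (z (σ 0)) (z (σ 3)) ^ 3)⁻¹ + (dist (z (σ 1)) (z (σ 2)) ^ 3)⁻¹ := by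
  intro h
  set θ : Fin 4 → ℝ := fun i => arg (z i)
  have hzθ (i : Fin 4) : z i = R * exp (θ i * I) := by
    rw [← hR i]; exact (norm_mul_exp_arg_mul_I _).symm
  have hθ : Function.Injective θ := fun i j hij => hz (by rw [hzθ i, hzθ j, hij])
  have hRpos : 0 < R := by
    refine (hR 0 ▸ norm_nonneg _).lt_of_ne fun hR0 => hz.ne (show (0 : Fin 4) ≠ 1 by decide) ?_
    rw [hzθ, hzθ, ← hR0, ofReal_zero, zero_mul, zero_mul]
  set τ := Tuple.sort θ
  have hτ : StrictMono (θ ∘ τ) :=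
    (Tuple.monotone_sort θ).strictMono_of_injective (hθ.comp τ.injective)
  -- the two relabellings below put the pairs of opposite sides `{01, 23}` and `{12, 03}` of the
  -- cyclic quadrilateral `z (τ 0), …, z (τ 3)` against its diagonals `{02, 13}`
  refine inv_dist_cube_pairings_ne_of_strictMono hRpos hτ ?_ (fun i => hzθ (τ i)) ⟨?_, ?_⟩
  · change θ (τ 3) < θ (τ 0) + 2 * π
    linarith [(arg_mem_Ioc (z (τ 3))).2, (arg_mem_Ioc (z (τ 0))).1]
  · have h₁ := h (τ * (Equiv.swap 2 3 * Equiv.swap 1 2))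
    simp only [Equiv.Perm.coe_mul, Function.comp_apply, ne_eq, zero_ne_one, not_false_eq_true,
      Fin.reduceEq, Equiv.swap_apply_of_ne_of_ne, Equiv.swap_apply_right,
      Equiv.swap_apply_left] at h₁
    rwa [dist_comm (z (τ 3)), dist_comm (z (τ 3))] at h₁
  · have h₂ := h (τ * Equiv.swap 0 1)
    simp only [Equiv.Perm.coe_mul, Function.comp_apply, Equiv.swap_apply_of_ne_of_ne, ne_eq,
      Fin.reduceEq, not_false_eq_true, Equiv.swap_apply_right, Equiv.swap_apply_left] at h₂
    rw [h₂, add_comm]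

end Complex

theorem EuclideanGeometry.Cospherical.not_forall_inv_dist_cube_add_eq {E : Type*}
    [NormedAddCommGroup E] [InnerProductSpace ℝ E] [Fact (finrank ℝ E = 2)] {r : Fin 4 → E}
    (hcos : Cospherical (Set.range r)) (hr : Function.Injective r) :
    ¬ ∀ σ : Equiv.Perm (Fin 4),
      (dist (r (σ 0)) (r (σ 2)) ^ 3)⁻¹ + (dist (r (σ 1)) (r (σ 3)) ^ 3)⁻¹
        = (dist (r (σ 0)) (r (σ 3)) ^ 3)⁻¹ + (dist (r (σ 1)) (r (σ 2)) ^ 3)⁻¹ := by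
  have : FiniteDimensional ℝ E := .of_fact_finrank_eq_two
  obtain ⟨c, R, hcR⟩ := hcos
  let e : E ≃ₗᵢ[ℝ] ℂ := ((stdOrthonormalBasis ℝ E).reindex (finCongr Fact.out)).repr.trans
    Complex.orthonormalBasisOneI.repr.symm
  have := Complex.not_forall_inv_dist_cube_add_eq (z := fun i => e (r i - c))
    (e.injective.comp fun i j hij => hr (sub_left_injective hij))
    (fun i => by rw [e.norm_map, ← dist_eq_norm, hcR _ (Set.mem_range_self i)])
  simpa only [LinearIsometryEquiv.dist_map, dist_sub_right] using this

/-- There is no planar non-collinear four-body central configuration with vanishing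
total mass, vanishing vector of inertia, and vanishing moment of inertia. -/
theorem no_central_config_vanishing_mass_inertia_moment :
    ¬ ∃ (r : Fin 4 → EuclideanSpace ℝ (Fin 2)) (m : Fin 4 → ℝ) (ξ : ℝ),
        Function.Injective r ∧
        ¬ Collinear ℝ (Set.range r) ∧
        (∀ i, m i ≠ 0) ∧
        ∑ i, m i = 0 ∧
        ∑ i, m i • r i = 0 ∧
        ∑ i, m i * ‖r i‖ ^ 2 = 0 ∧
        IsCentral m r ξ := by
  rintro ⟨r, m, ξ, hr, hncol, hm, hM, hL, hI, hC⟩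
  have hcos : Cospherical (Set.range r) :=
    cospherical_range_of_sum_eq_zero (Fintype.card_fin 4) hncol (fun h => hm 0 (congrFun h 0))
      hM hL hI
  exact hcos.not_forall_inv_dist_cube_add_eq hr (hC.inv_dist_cube_add_eq hm hM hL hr hcos)
end
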